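/- Let Φ be a root system for a finite real reflection group W, and let (C⃗, c⃗) be a nontrivial m-dependence in Φ with m ≥ 3, whose entries α_1,…,α_m are pairwise distinct and whose underlying set {α_1,…,α_m} is a circuit (so all c_i ≠ 0). Then for each 1 ≤ i ≤ m−1: (a) if ⟨c_iα_i, c_{i+1}α_{i+1}⟩ = 0, then wt(σ_i(C⃗,c⃗)) = wt(σ_i^{-1}(C⃗,c⃗)) = wt(c⃗); (b) if ⟨c_iα_i, c_{i+1}α_{i+1}⟩ > 0, then wt(σ_i(C⃗,c⃗)) > wt(c⃗) and wt(σ_i^{-1}(C⃗,c⃗)) > wt(c⃗); (c) if ⟨c_iα_i, c_{i+1}α_{i+1}⟩ < 0, then wt(σ_i(C⃗,c⃗)) < wt(c⃗) or wt(σ_i^{-1}(C⃗,c⃗)) < wt(c⃗). -/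

import Mathlib

open scoped RealInnerProductSpace

variable {V : Type*} [NormedAddCommGroup V] [InnerProductSpace ℝ V] [FiniteDimensional ℝ V]

/-- The orthogonal reflection in the hyperplane `α^⊥`. -/
noncomputable def reflAlong (α : V) : V ≃ₗᵢ[ℝ] V :=
  Submodule.reflection ((Submodule.span ℝ {α})ᗮ)

/-- An orthogonal reflection: the reflection through the hyperplane orthogonal to some
nonzero vector. -/
def IsReflection (g : V ≃ₗᵢ[ℝ] V) : Prop :=
  ∃ α : V, α ≠ 0 ∧ g = reflAlong α

/-- A finite real reflection group: a finite subgroup of the orthogonal group generated by its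
reflections and fixing no nonzero vector. -/
def IsReflectionGroup (W : Subgroup (V ≃ₗᵢ[ℝ] V)) : Prop :=
  (W : Set (V ≃ₗᵢ[ℝ] V)).Finite ∧
    Subgroup.closure {g | g ∈ W ∧ IsReflection g} = W ∧
    ∀ v : V, (∀ g ∈ W, g v = v) → v = 0
/-- A root system for `W`: a finite `W`-stable set of nonzero vectors, containing exactly two
opposite normal vectors for each reflecting hyperplane of a reflection of `W`. -/
def IsRootSystem (W : Subgroup (V ≃ₗᵢ[ℝ] V)) (Φ : Set V) : Prop :=
  Φ.Finite ∧
    (∀ g ∈ W, ∀ α ∈ Φ, g α ∈ Φ) ∧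
    (∀ α ∈ Φ, α ≠ 0 ∧ reflAlong α ∈ W) ∧
    (∀ α ∈ Φ, {x | x ∈ Φ ∧ ∃ r : ℝ, x = r • α} = {α, -α}) ∧
    (∀ g ∈ W, IsReflection g → ∃ α ∈ Φ, g = reflAlong α)
/-- A circuit: a finite linearly dependent set of vectors, every proper subset of which is
linearly independent. -/
def IsCircuit {V' : Type*} [AddCommGroup V'] [Module ℝ V'] (C : Set V') : Prop :=
  C.Finite ∧ ¬ LinearIndependent ℝ (fun x : C => (x : V')) ∧
    ∀ D : Set V', D ⊂ C → LinearIndependent ℝ (fun x : D => (x : V'))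

/-- The weight of a coefficient vector: the sum of absolute values of its entries. -/
noncomputable def wtFn {m : ℕ} (c : Fin m → ℝ) : ℝ := ∑ i, |c i|

/-- The coefficient vector obtained from the lifted Hurwitz move `σ_i` (at positions
`i, i1 = i+1`). -/
noncomputable def sigmaC {V' : Type*} [NormedAddCommGroup V'] [InnerProductSpace ℝ V']
    {m : ℕ} (α : Fin m → V') (c : Fin m → ℝ) (i i1 : Fin m) : Fin m → ℝ :=
  fun j =>
    if j = i then c i1 + 2 * ⟪α i, α i1⟫ / ⟪α i1, α i1⟫ * c i
    else if j = i1 then c i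
    else c j

/-- The coefficient vector obtained from the inverse lifted Hurwitz move `σ_i⁻¹`. -/
noncomputable def sigmaInvC {V' : Type*} [NormedAddCommGroup V'] [InnerProductSpace ℝ V']
    {m : ℕ} (α : Fin m → V') (c : Fin m → ℝ) (i i1 : Fin m) : Fin m → ℝ :=
  fun j =>
    if j = i then c i1
    else if j = i1 then c i + 2 * ⟪α i1, α i⟫ / ⟪α i, α i⟫ * c i1
    else c j

/-!
Only the entries at `i, i+1` change, so `σ_i` changes the weight by
`|c_{i+1} + 2⟪α_i, α_{i+1}⟫/‖α_{i+1}‖² c_i| - |c_{i+1}|`, and `σ_i⁻¹` symmetrically. The added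
term has, relative to the term it is added to, the sign of `⟪c_i α_i, c_{i+1} α_{i+1}⟫`, which
settles (a) and (b). In case (c), if neither weight drops, both added terms are at least twice the
terms they are added to; multiplying the two inequalities gives
`⟪α_i, α_{i+1}⟫² ≥ ‖α_i‖² ‖α_{i+1}‖²`, against strict Cauchy–Schwarz for the pair `α_i, α_{i+1}`,
which is linearly independent as a proper subset of a circuit with at least three elements.
Minimality of the circuit also forces every `c_j` to be nonzero.
-/

section Circuit

variable {ι E : Type*} [AddCommGroup E] [Module ℝ E] {α : ι → E}

theorem IsCircuit.linearIndepOn_of_ne_univ (hinj : Function.Injective α)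
    (hcirc : IsCircuit (Set.range α)) {s : Set ι} (hs : s ≠ Set.univ) :
    LinearIndepOn ℝ α s := by
  rw [linearIndepOn_iff_image hinj.injOn]
  refine hcirc.2.2 _ (Set.ssubset_iff_subset_ne.2 ⟨Set.image_subset_range α s, ?_⟩)
  rw [← Set.image_univ]
  exact fun h => hs (hinj.image_injective h)

theorem IsCircuit.coeff_ne_zero [Fintype ι] (hinj : Function.Injective α)
    (hcirc : IsCircuit (Set.range α)) {c : ι → ℝ} (hne : c ≠ 0) (hdep : ∑ j, c j • α j = 0)
    (j : ι) : c j ≠ 0 := by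
  classical
  intro hj
  have hindep := hcirc.linearIndepOn_of_ne_univ hinj (s := {j}ᶜ)
    (fun h => by simpa using congrArg (j ∈ ·) h)
  have hsum : ∑ l ∈ Finset.univ.erase j, c l • α l = 0 := by
    rw [Finset.sum_erase _ (by simp [hj]), hdep]
  have hzero := linearIndepOn_iff''.1 hindep _ c (by simp) (by simp [hj]) hsum
  exact hne (funext fun l => if hl : l = j then hl ▸ hj else hzero l (by simp [hl]))

theorem IsCircuit.linearIndependent_pair [Fintype ι] (hinj : Function.Injective α)
    (hcirc : IsCircuit (Set.range α)) (hcard : 3 ≤ Fintype.card ι) {i i' : ι} (hii' : i ≠ i') :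
    LinearIndependent ℝ ![α i, α i'] := by
  classical
  obtain ⟨k, -, hk⟩ := Finset.exists_mem_notMem_of_card_lt_card (s := {i, i'})
    (t := Finset.univ) ((Finset.card_le_two).trans_lt (by rw [Finset.card_univ]; omega))
  have hpair := hcirc.linearIndepOn_of_ne_univ hinj (s := {i, i'})
    (fun h => hk (by simpa using congrArg (k ∈ ·) h))
  exact LinearIndependent.pair_iff.2 ((LinearIndepOn.pair_iff α hii').1 hpair)

end Circuit

theorem abs_lt_abs_add_of_mul_pos {y t : ℝ} (h : 0 < y * t) : |y| < |y + t| := by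
  rw [← sq_lt_sq]
  nlinarith [sq_nonneg t]

theorem abs_add_lt_abs_of_mul_neg {y t : ℝ} (h : y * t < 0) (ht : |t| < 2 * |y|) :
    |y + t| < |y| := by
  have hyt : |y| * |t| = -(y * t) := by rw [← abs_mul, abs_of_neg h]
  rw [← sq_lt_sq]
  nlinarith [abs_nonneg t, sq_abs t]

section HurwitzPair

variable {E : Type*} [NormedAddCommGroup E] [InnerProductSpace ℝ E] {a b : E} {x y : ℝ}

theorem real_inner_mul_inner_self_lt_of_linearIndependent (h : LinearIndependent ℝ ![a, b]) :
    ⟪a, b⟫ * ⟪a, b⟫ < ⟪a, a⟫ * ⟪b, b⟫ := by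
  have hdet := (Matrix.posDef_gram_of_linearIndependent h).det_pos
  rw [Matrix.det_fin_two] at hdet
  simp only [Matrix.gram_apply, Matrix.cons_val_zero, Matrix.cons_val_one] at hdet
  rw [real_inner_comm a b] at hdet
  linarith

theorem mul_two_inner_div_inner_self_mul (a b : E) (x y : ℝ) :
    y * (2 * ⟪a, b⟫ / ⟪b, b⟫ * x) = 2 * ⟪x • a, y • b⟫ / ⟪b, b⟫ := by
  rw [real_inner_smul_left, real_inner_smul_right]
  ring

theorem abs_add_mul_eq_abs_of_inner_smul_eq_zero (hy : y ≠ 0) (h : ⟪x • a, y • b⟫ = 0) :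
    |y + 2 * ⟪a, b⟫ / ⟪b, b⟫ * x| = |y| := by
  have hprod := mul_two_inner_div_inner_self_mul a b x y
  rw [h, mul_zero, zero_div, mul_eq_zero, or_iff_right hy] at hprod
  rw [hprod, add_zero]

theorem abs_lt_abs_add_mul_of_inner_smul_pos (h : 0 < ⟪x • a, y • b⟫) :
    |y| < |y + 2 * ⟪a, b⟫ / ⟪b, b⟫ * x| := by
  have hb : b ≠ 0 := by rintro rfl; simp at h
  refine abs_lt_abs_add_of_mul_pos ?_
  rw [mul_two_inner_div_inner_self_mul]
  exact div_pos (by linarith) (real_inner_self_pos.2 hb)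

theorem abs_add_mul_lt_abs_of_inner_smul_neg (h : ⟪x • a, y • b⟫ < 0)
    (hsmall : |2 * ⟪a, b⟫ / ⟪b, b⟫ * x| < 2 * |y|) :
    |y + 2 * ⟪a, b⟫ / ⟪b, b⟫ * x| < |y| := by
  have hb : b ≠ 0 := by rintro rfl; simp at h
  refine abs_add_lt_abs_of_mul_neg ?_ hsmall
  rw [mul_two_inner_div_inner_self_mul]
  exact div_neg_of_neg_of_pos (by linarith) (real_inner_self_pos.2 hb)

theorem abs_mul_abs_lt_of_linearIndependent (hab : LinearIndependent ℝ ![a, b]) (hx : x ≠ 0)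
    (hy : y ≠ 0) :
    |2 * ⟪a, b⟫ / ⟪b, b⟫ * x| * |2 * ⟪b, a⟫ / ⟪a, a⟫ * y| < 2 * |y| * (2 * |x|) := by
  have hna : 0 < ⟪a, a⟫ := real_inner_self_pos.2 (hab.ne_zero 0)
  have hnb : 0 < ⟪b, b⟫ := real_inner_self_pos.2 (hab.ne_zero 1)
  have hcs : ⟪a, b⟫ * ⟪a, b⟫ / (⟪a, a⟫ * ⟪b, b⟫) < 1 :=
    (div_lt_one (mul_pos hna hnb)).2 (real_inner_mul_inner_self_lt_of_linearIndependent hab)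
  have hxy : 0 < 4 * |x| * |y| := by positivity
  calc |2 * ⟪a, b⟫ / ⟪b, b⟫ * x| * |2 * ⟪b, a⟫ / ⟪a, a⟫ * y|
      = ⟪a, b⟫ * ⟪a, b⟫ / (⟪a, a⟫ * ⟪b, b⟫) * (4 * |x| * |y|) := by
        rw [← abs_mul_abs_self ⟪a, b⟫, real_inner_comm a b]
        simp only [abs_mul, abs_div, abs_two, abs_of_pos hna, abs_of_pos hnb]
        field_simp
        ring
    _ < 1 * (4 * |x| * |y|) := mul_lt_mul_of_pos_right hcs hxy
    _ = 2 * |y| * (2 * |x|) := by ring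

theorem abs_add_mul_lt_abs_or_of_inner_smul_neg (hab : LinearIndependent ℝ ![a, b])
    (h : ⟪x • a, y • b⟫ < 0) :
    |y + 2 * ⟪a, b⟫ / ⟪b, b⟫ * x| < |y| ∨ |x + 2 * ⟪b, a⟫ / ⟪a, a⟫ * y| < |x| := by
  have hx : x ≠ 0 := by rintro rfl; simp at h
  have hy : y ≠ 0 := by rintro rfl; simp at h
  have hsmall : |2 * ⟪a, b⟫ / ⟪b, b⟫ * x| < 2 * |y| ∨ |2 * ⟪b, a⟫ / ⟪a, a⟫ * y| < 2 * |x| := by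
    by_contra! hbig
    exact (abs_mul_abs_lt_of_linearIndependent hab hx hy).not_ge
      (mul_le_mul hbig.1 hbig.2 (by positivity) (abs_nonneg _))
  exact hsmall.imp (abs_add_mul_lt_abs_of_inner_smul_neg h)
    (abs_add_mul_lt_abs_of_inner_smul_neg (by rwa [real_inner_comm]))

end HurwitzPair

section Weight

variable {m : ℕ} {i i' : Fin m}

theorem wtFn_ite_pair (c : Fin m → ℝ) (hii' : i ≠ i') (u v : ℝ) :
    wtFn (fun j => if j = i then u else if j = i' then v else c j) =
      wtFn c + (|u| - |c i|) + (|v| - |c i'|) := by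
  have key : ∀ j, |if j = i then u else if j = i' then v else c j| =
      |c j| + (if j = i then |u| - |c i| else 0) + (if j = i' then |v| - |c i'| else 0) := by
    intro j
    by_cases hj : j = i
    · simp [hj, hii']
    · by_cases hj' : j = i' <;> simp [hj, hj', hii'.symm]
  simp only [wtFn, key, Finset.sum_add_distrib, Finset.sum_ite_eq', Finset.mem_univ, if_true]

variable {E : Type*} [NormedAddCommGroup E] [InnerProductSpace ℝ E] (α : Fin m → E) (c : Fin m → ℝ)

theorem wtFn_sigmaC (hii' : i ≠ i') :
    wtFn (sigmaC α c i i') =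
      wtFn c + (|c i' + 2 * ⟪α i, α i'⟫ / ⟪α i', α i'⟫ * c i| - |c i'|) := by
  unfold sigmaC
  rw [wtFn_ite_pair c hii']
  ring

theorem wtFn_sigmaInvC (hii' : i ≠ i') :
    wtFn (sigmaInvC α c i i') =
      wtFn c + (|c i + 2 * ⟪α i', α i⟫ / ⟪α i, α i⟫ * c i'| - |c i|) := by
  unfold sigmaInvC
  rw [wtFn_ite_pair c hii']
  ring

end Weight

theorem stmt10_general
    (m : ℕ) (hm : 3 ≤ m) (α : Fin m → V) (c : Fin m → ℝ)
    (hinj : Function.Injective α)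
    (hcirc : IsCircuit (Set.range α))
    (hne : c ≠ 0) (hdep : ∑ j, c j • α j = 0)
    (i i1 : Fin m) (hi1 : (i1 : ℕ) = (i : ℕ) + 1) :
    (⟪c i • α i, c i1 • α i1⟫ = 0 →
      wtFn (sigmaC α c i i1) = wtFn c ∧ wtFn (sigmaInvC α c i i1) = wtFn c) ∧
    (0 < ⟪c i • α i, c i1 • α i1⟫ →
      wtFn c < wtFn (sigmaC α c i i1) ∧ wtFn c < wtFn (sigmaInvC α c i i1)) ∧
    (⟪c i • α i, c i1 • α i1⟫ < 0 →
      wtFn (sigmaC α c i i1) < wtFn c ∨ wtFn (sigmaInvC α c i i1) < wtFn c) := by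
  have hii1 : i ≠ i1 := fun h => by rw [h] at hi1; omega
  have hpair := hcirc.linearIndependent_pair hinj (by simpa using hm) hii1
  have hc := hcirc.coeff_ne_zero hinj hne hdep
  rw [wtFn_sigmaC α c hii1, wtFn_sigmaInvC α c hii1]
  refine ⟨fun h => ?_, fun h => ?_, fun h => ?_⟩
  · rw [abs_add_mul_eq_abs_of_inner_smul_eq_zero (hc i1) h,
      abs_add_mul_eq_abs_of_inner_smul_eq_zero (hc i) (by rwa [real_inner_comm])]
    simp
  · have hσ := abs_lt_abs_add_mul_of_inner_smul_pos h
    have hσinv := abs_lt_abs_add_mul_of_inner_smul_pos (by rwa [real_inner_comm] at h)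
    constructor <;> linarith
  · rcases abs_add_mul_lt_abs_or_of_inner_smul_neg hpair h with hσ | hσinv
    · exact Or.inl (by linarith)
    · exact Or.inr (by linarith)

/-- How the lifted Hurwitz moves `σ_i, σ_i⁻¹` change the weight of a nontrivial `m`-dependence
supported on a circuit, according to the sign of `⟪c_i α_i, c_{i+1} α_{i+1}⟫`. -/
theorem stmt10 (W : Subgroup (V ≃ₗᵢ[ℝ] V)) (hW : IsReflectionGroup W)
    (Φ : Set V) (hΦ : IsRootSystem W Φ)
    (m : ℕ) (hm : 3 ≤ m) (α : Fin m → V) (c : Fin m → ℝ)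
    (hαΦ : ∀ j, α j ∈ Φ) (hinj : Function.Injective α)
    (hcirc : IsCircuit (Set.range α))
    (hne : c ≠ 0) (hdep : ∑ j, c j • α j = 0)
    (i i1 : Fin m) (hi1 : (i1 : ℕ) = (i : ℕ) + 1) :
    (⟪c i • α i, c i1 • α i1⟫ = 0 →
      wtFn (sigmaC α c i i1) = wtFn c ∧ wtFn (sigmaInvC α c i i1) = wtFn c) ∧
    (0 < ⟪c i • α i, c i1 • α i1⟫ →
      wtFn c < wtFn (sigmaC α c i i1) ∧ wtFn c < wtFn (sigmaInvC α c i i1)) ∧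
    (⟪c i • α i, c i1 • α i1⟫ < 0 →
      wtFn (sigmaC α c i i1) < wtFn c ∨ wtFn (sigmaInvC α c i i1) < wtFn c) :=
  stmt10_general m hm α c hinj hcirc hne hdep i i1 hi1
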